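/- arXiv:2211.16185 — 4 statements merged into one kernel-verified Lean document; each statement's English description precedes it below -/
import Mathlib

section
/- Let X, Y, A, Z be finitely-valued random variables with joint pmf p such that (A, X, Z) forms a Markov chain A ↔ X ↔ Z and (Y, A, Z) forms a Markov chain Y ↔ A ↔ Z. Then for every real α ≥ 0: I(X;(A,Z)) − (1+α)·I(Y;Z) ≥ (2+α)·I(X;(A,Z)) − (1+α)·( I(X;Z) + I(X;A) ). Equivalently, for any real β, the DisGenIB objective I(X;(A,Z)) + I(A;Y) − β·I(X;A) − (1+α)·I(Y;Z) is bounded below by (2+α)·I(X;(A,Z)) − (1+α)·I(X;Z) + C′ with C′ = I(A;Y) − β·I(X;A) − (1+α)·I(X;A). -/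
/-!
By the chain rule, `I(X;(A,Z)) = I(X;A) + I(X;Z|A)`. Expanding `I(Z;(A,X))` by the chain rule in
both orders and using `I(A;Z|X) = 0` (the chain `A ↔ X ↔ Z`) gives `I(A;Z) + I(X;Z|A) = I(X;Z)`,
so `I(X;Z) + I(X;A) - I(X;(A,Z)) = I(A;Z)`. In the same way the chain `Y ↔ A ↔ Z` gives
`I(Y;Z) + I(A;Z|Y) = I(A;Z)`, and `I(A;Z|Y) ≥ 0` by Gibbs' inequality. Both inequalities thus
reduce to `(1 + α) (I(A;Z) - I(Y;Z)) ≥ 0`.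
-/

/-- Mutual information `I(U;V)` of two finitely-valued random variables jointly
distributed according to the pmf `p` (given in curried form), with the convention
that terms with `p u v = 0` contribute `0` (here automatic, since `0 * log _ = 0`). -/
noncomputable def mutualInfo {α β : Type*} [Fintype α] [Fintype β] (p : α → β → ℝ) : ℝ :=
  ∑ u, ∑ v, p u v * Real.log (p u v / ((∑ v', p u v') * (∑ u', p u' v)))

open Finset Real

theorem sum_pos_of_pos {ι : Type*} [Fintype ι] {f : ι → ℝ} (hf : ∀ i, 0 ≤ f i) {i : ι}
    (hi : 0 < f i) : 0 < ∑ j, f j :=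
  hi.trans_le (single_le_sum (fun j _ => hf j) (mem_univ i))

theorem sum_sum_sum_rotate {ι κ τ : Type*} [Fintype ι] [Fintype κ] [Fintype τ]
    (F : ι → κ → τ → ℝ) : ∑ j, ∑ k, ∑ i, F i j k = ∑ i, ∑ j, ∑ k, F i j k :=
  calc ∑ j, ∑ k, ∑ i, F i j k = ∑ j, ∑ i, ∑ k, F i j k := sum_congr rfl fun _ _ => sum_comm
    _ = ∑ i, ∑ j, ∑ k, F i j k := sum_comm

theorem sub_le_mul_log_div {f g : ℝ} (hf : 0 ≤ f) (hg : 0 ≤ g) (hfg : 0 < f → 0 < g) :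
    f - g ≤ f * log (f / g) := by
  rcases hf.eq_or_lt with rfl | hf
  · simpa using hg
  have h := mul_le_mul_of_nonneg_left (one_sub_inv_le_log_of_pos (div_pos hf (hfg hf))) hf.le
  rwa [inv_div, mul_sub, mul_one, mul_div_cancel₀ _ hf.ne'] at h

section PointwiseMutualInfo

variable {α β γ : Type*} [Fintype α] [Fintype β] [Fintype γ]

noncomputable def pointwiseMutualInfo (P : α → β → ℝ) (a : α) (b : β) : ℝ :=
  log (P a b / ((∑ b', P a b') * ∑ a', P a' b))

theorem mutualInfo_eq_sum_mul_pointwiseMutualInfo (P : α → β → ℝ) :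
    mutualInfo P = ∑ a, ∑ b, P a b * pointwiseMutualInfo P a b :=
  rfl

theorem mutualInfo_sum_eq_sum_mul_pointwiseMutualInfo (f : α → β → γ → ℝ) :
    mutualInfo (fun a b => ∑ c, f a b c)
      = ∑ a, ∑ b, ∑ c, f a b c * pointwiseMutualInfo (fun a b => ∑ c, f a b c) a b := by
  simp only [mutualInfo_eq_sum_mul_pointwiseMutualInfo, sum_mul]

theorem mutualInfo_sum_sum_comm {δ : Type*} [Fintype δ] (f : α → β → γ → δ → ℝ) :
    mutualInfo (fun a b => ∑ c, ∑ d, f a b c d) = mutualInfo (fun a b => ∑ d, ∑ c, f a b c d) := by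
  simp only [sum_comm (γ := γ) (α := δ)]

theorem pointwiseMutualInfo_of_pos {P : α → β → ℝ} (hP : ∀ a b, 0 ≤ P a b) {a : α} {b : β}
    (h : 0 < P a b) :
    pointwiseMutualInfo P a b = log (P a b) - log (∑ b', P a b') - log (∑ a', P a' b) := by
  have hrow : 0 < ∑ b', P a b' := sum_pos_of_pos (hP a) h
  have hcol : 0 < ∑ a', P a' b := sum_pos_of_pos (fun a' => hP a' b) h
  rw [pointwiseMutualInfo, log_div h.ne' (by positivity), log_mul hrow.ne' hcol.ne', sub_sub]

end PointwiseMutualInfo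

section MarkovChain

variable {U V W : Type*} [Fintype U] [Fintype W]

def IsMarkovChain (q : U → V → W → ℝ) : Prop :=
  ∀ u v w, q u v w * ∑ u', ∑ w', q u' v w' = (∑ w', q u v w') * ∑ u', q u' v w

theorem isMarkovChain_sum_iff {T : Type*} [Fintype T] {r : T → U → V → W → ℝ} :
    IsMarkovChain (fun u v w => ∑ t, r t u v w) ↔
      ∀ u v w, (∑ t, r t u v w) * (∑ t, ∑ u', ∑ w', r t u' v w')
        = (∑ t, ∑ w', r t u v w') * (∑ t, ∑ u', r t u' v w) := by
  simp only [IsMarkovChain, sum_comm (γ := W) (α := T), sum_comm (γ := U) (α := T)]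

variable {q : U → V → W → ℝ}

theorem IsMarkovChain.log_add_log (hq : ∀ u v w, 0 ≤ q u v w) (hM : IsMarkovChain q)
    {u : U} {v : V} {w : W} (h : 0 < q u v w) :
    log (q u v w) + log (∑ u', ∑ w', q u' v w')
      = log (∑ w', q u v w') + log (∑ u', q u' v w) := by
  have hv : 0 < ∑ u', ∑ w', q u' v w' :=
    sum_pos_of_pos (fun u' => sum_nonneg fun _ _ => hq u' v _) (sum_pos_of_pos (hq u v) h)
  rw [← log_mul h.ne' hv.ne', hM u v w,
    log_mul (sum_pos_of_pos (hq u v) h).ne' (sum_pos_of_pos (fun u' => hq u' v w) h).ne']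

end MarkovChain

section CondMutualInfo

variable {U V W : Type*} [Fintype V] [Fintype W] {q : U → V → W → ℝ}

noncomputable def pointwiseCondMutualInfo (q : U → V → W → ℝ) (u : U) (v : V) (w : W) : ℝ :=
  log (q u v w * (∑ v', ∑ w', q u v' w') / ((∑ w', q u v w') * ∑ v', q u v' w))

theorem pointwiseCondMutualInfo_of_pos (hq : ∀ u v w, 0 ≤ q u v w) {u : U} {v : V} {w : W}
    (h : 0 < q u v w) :
    pointwiseCondMutualInfo q u v w = log (q u v w) + log (∑ v', ∑ w', q u v' w')
      - log (∑ w', q u v w') - log (∑ v', q u v' w) := by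
  have hu : 0 < ∑ v', ∑ w', q u v' w' :=
    sum_pos_of_pos (fun v' => sum_nonneg fun _ _ => hq u v' _) (sum_pos_of_pos (hq u v) h)
  have huv : 0 < ∑ w', q u v w' := sum_pos_of_pos (hq u v) h
  have huw : 0 < ∑ v', q u v' w := sum_pos_of_pos (fun v' => hq u v' w) h
  rw [pointwiseCondMutualInfo, log_div (by positivity) (by positivity), log_mul h.ne' hu.ne',
    log_mul huv.ne' huw.ne', sub_sub]

variable [Fintype U]

/-- `condMutualInfo q` is `I(V;W|U)` for `(U,V,W)` distributed according to `q`. -/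
noncomputable def condMutualInfo (q : U → V → W → ℝ) : ℝ :=
  ∑ u, ∑ v, ∑ w, q u v w * pointwiseCondMutualInfo q u v w

theorem sum_mul_add_sum_mul_of_pos (hq : ∀ u v w, 0 ≤ q u v w) {f g h : U → V → W → ℝ}
    (hfg : ∀ u v w, 0 < q u v w → f u v w + g u v w = h u v w) :
    ∑ u, ∑ v, ∑ w, q u v w * f u v w + ∑ u, ∑ v, ∑ w, q u v w * g u v w
      = ∑ u, ∑ v, ∑ w, q u v w * h u v w := by
  simp only [← sum_add_distrib, ← mul_add]
  refine sum_congr rfl fun u _ => sum_congr rfl fun v _ => sum_congr rfl fun w _ => ?_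
  rcases (hq u v w).eq_or_lt with h0 | hpos
  · simp [← h0]
  · rw [hfg u v w hpos]

theorem condMutualInfo_nonneg (hq : ∀ u v w, 0 ≤ q u v w) : 0 ≤ condMutualInfo q := by
  -- `g u v w = q(u) q(v|u) q(w|u)` has the same total mass as `q`.
  set g : U → V → W → ℝ := fun u v w =>
    (∑ w', q u v w') * (∑ v', q u v' w) / ∑ v', ∑ w', q u v' w' with hg_def
  have hg : ∀ u v w, 0 ≤ g u v w := fun u v w =>
    div_nonneg (mul_nonneg (sum_nonneg fun _ _ => hq _ _ _) (sum_nonneg fun _ _ => hq _ _ _))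
      (sum_nonneg fun _ _ => sum_nonneg fun _ _ => hq _ _ _)
  have hqg : ∀ u v w, 0 < q u v w → 0 < g u v w := fun u v w h =>
    div_pos (mul_pos (sum_pos_of_pos (hq u v) h) (sum_pos_of_pos (fun v' => hq u v' w) h))
      (sum_pos_of_pos (fun v' => sum_nonneg fun _ _ => hq u v' _) (sum_pos_of_pos (hq u v) h))
  have hmass : ∀ u, ∑ v, ∑ w, g u v w = ∑ v, ∑ w, q u v w := fun u => by
    simp only [hg_def, ← sum_div, ← mul_sum, ← sum_mul]
    rw [sum_comm (f := fun w v' => q u v' w), mul_self_div_self]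
  calc (0 : ℝ) = ∑ u, ∑ v, ∑ w, (q u v w - g u v w) := by
        simp only [sum_sub_distrib, hmass, sub_self, sum_const_zero]
    _ ≤ ∑ u, ∑ v, ∑ w, q u v w * log (q u v w / g u v w) :=
        sum_le_sum fun u _ => sum_le_sum fun v _ => sum_le_sum fun w _ =>
          sub_le_mul_log_div (hq u v w) (hg u v w) (hqg u v w)
    _ = condMutualInfo q := by
        simp only [hg_def, div_div_eq_mul_div, condMutualInfo, pointwiseCondMutualInfo]

theorem mutualInfo_prod_eq_add_condMutualInfo (hq : ∀ u v w, 0 ≤ q u v w) :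
    mutualInfo (fun v (uw : U × W) => q uw.1 v uw.2)
      = mutualInfo (fun v u => ∑ w, q u v w) + condMutualInfo q := by
  rw [mutualInfo_eq_sum_mul_pointwiseMutualInfo, mutualInfo_sum_eq_sum_mul_pointwiseMutualInfo,
    condMutualInfo, Fintype.sum_congr _ _ fun v => Fintype.sum_prod_type _, sum_comm,
    sum_comm (s := univ (α := V))]
  refine (sum_mul_add_sum_mul_of_pos hq fun u v w h => ?_).symm
  rw [pointwiseMutualInfo_of_pos (P := fun v (uw : U × W) => q uw.1 v uw.2)
      (fun _ _ => hq _ _ _) h,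
    pointwiseMutualInfo_of_pos (P := fun v u => ∑ w, q u v w)
      (fun _ _ => sum_nonneg fun _ _ => hq _ _ _) (sum_pos_of_pos (hq u v) h),
    pointwiseCondMutualInfo_of_pos hq h, Fintype.sum_prod_type]
  ring

theorem IsMarkovChain.mutualInfo_add_condMutualInfo (hq : ∀ u v w, 0 ≤ q u v w)
    (hM : IsMarkovChain q) :
    mutualInfo (fun u w => ∑ v, q u v w) + condMutualInfo q
      = mutualInfo (fun v w => ∑ u, q u v w) := by
  rw [mutualInfo_sum_eq_sum_mul_pointwiseMutualInfo (fun u w v => q u v w),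
    mutualInfo_sum_eq_sum_mul_pointwiseMutualInfo (fun v w u => q u v w),
    sum_sum_sum_rotate (fun u v w => q u v w * _), condMutualInfo,
    sum_congr rfl fun u _ => sum_comm (s := univ (α := W))]
  refine sum_mul_add_sum_mul_of_pos hq fun u v w h => ?_
  rw [pointwiseMutualInfo_of_pos (P := fun u w => ∑ v, q u v w)
      (fun _ _ => sum_nonneg fun _ _ => hq _ _ _) (sum_pos_of_pos (fun v' => hq u v' w) h),
    pointwiseMutualInfo_of_pos (P := fun v w => ∑ u, q u v w)
      (fun _ _ => sum_nonneg fun _ _ => hq _ _ _) (sum_pos_of_pos (fun u' => hq u' v w) h),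
    pointwiseCondMutualInfo_of_pos hq h, sum_comm (f := fun w' v => q u v w'),
    sum_comm (f := fun w' u => q u v w'), sum_comm (f := fun v' u => q u v' w)]
  linear_combination hM.log_add_log hq h

end CondMutualInfo

theorem disGenIB_prior_reduction_general
    {X Y A Z : Type*} [Fintype X] [Fintype Y] [Fintype A] [Fintype Z]
    (p : X → Y → A → Z → ℝ)
    (hp0 : ∀ x y a z, 0 ≤ p x y a z)
    -- Markov chain `A ↔ X ↔ Z`, i.e. `p(x,a,z)·p(x) = p(x,a)·p(x,z)`:
    (hMarkovAXZ : ∀ x a z,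
      (∑ y, p x y a z) * (∑ y, ∑ a', ∑ z', p x y a' z')
        = (∑ y, ∑ z', p x y a z') * (∑ y, ∑ a', p x y a' z))
    -- Markov chain `Y ↔ A ↔ Z`, i.e. `p(a,y,z)·p(a) = p(a,y)·p(a,z)`:
    (hMarkovYAZ : ∀ a y z,
      (∑ x, p x y a z) * (∑ x, ∑ y', ∑ z', p x y' a z')
        = (∑ x, ∑ z', p x y a z') * (∑ x, ∑ y', p x y' a z))
    (α : ℝ) (hα : 0 ≤ α) :
    (mutualInfo (fun x (az : A × Z) => ∑ y, p x y az.1 az.2)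
        - (1 + α) * mutualInfo (fun y z => ∑ x, ∑ a, p x y a z)
      ≥ (2 + α) * mutualInfo (fun x (az : A × Z) => ∑ y, p x y az.1 az.2)
        - (1 + α) * (mutualInfo (fun x z => ∑ y, ∑ a, p x y a z)
                      + mutualInfo (fun x a => ∑ y, ∑ z, p x y a z)))
    ∧ ∀ β : ℝ,
      mutualInfo (fun x (az : A × Z) => ∑ y, p x y az.1 az.2)
          + mutualInfo (fun a y => ∑ x, ∑ z, p x y a z)
          - β * mutualInfo (fun x a => ∑ y, ∑ z, p x y a z)
          - (1 + α) * mutualInfo (fun y z => ∑ x, ∑ a, p x y a z)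
        ≥ (2 + α) * mutualInfo (fun x (az : A × Z) => ∑ y, p x y az.1 az.2)
          - (1 + α) * mutualInfo (fun x z => ∑ y, ∑ a, p x y a z)
          + (mutualInfo (fun a y => ∑ x, ∑ z, p x y a z)
              - β * mutualInfo (fun x a => ∑ y, ∑ z, p x y a z)
              - (1 + α) * mutualInfo (fun x a => ∑ y, ∑ z, p x y a z)) := by
  have hqAXZ : ∀ a x z, 0 ≤ ∑ y, p x y a z := fun a x z => sum_nonneg fun y _ => hp0 x y a z
  have hqYAZ : ∀ y a z, 0 ≤ ∑ x, p x y a z := fun y a z => sum_nonneg fun x _ => hp0 x y a z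
  have hAXZ : IsMarkovChain fun a x z => ∑ y, p x y a z :=
    isMarkovChain_sum_iff.2 fun a x z => hMarkovAXZ x a z
  have hYAZ : IsMarkovChain fun y a z => ∑ x, p x y a z :=
    isMarkovChain_sum_iff.2 fun y a z => hMarkovYAZ a y z
  have hXAZ := mutualInfo_prod_eq_add_condMutualInfo hqAXZ
  have hXZ := hAXZ.mutualInfo_add_condMutualInfo hqAXZ
  have hAZ := hYAZ.mutualInfo_add_condMutualInfo hqYAZ
  rw [mutualInfo_sum_sum_comm (fun x a z y => p x y a z)] at hXAZ
  rw [mutualInfo_sum_sum_comm (fun a z x y => p x y a z),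
    mutualInfo_sum_sum_comm (fun x z a y => p x y a z)] at hXZ
  rw [mutualInfo_sum_sum_comm (fun y z a x => p x y a z)] at hAZ
  have hgap := mul_nonneg (by linarith : 0 ≤ 1 + α) (condMutualInfo_nonneg hqYAZ)
  exact ⟨by nlinarith, fun β => by nlinarith⟩

/-- **Theorem 3** (reduction of DisGenIB under a prior on `A`).
Given the Markov chains `A ↔ X ↔ Z` and `Y ↔ A ↔ Z`, for every real `α ≥ 0`,
`I(X;(A,Z)) − (1+α)·I(Y;Z) ≥ (2+α)·I(X;(A,Z)) − (1+α)·(I(X;Z) + I(X;A))`;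
equivalently, for any real `β`, the DisGenIB objective
`I(X;(A,Z)) + I(A;Y) − β·I(X;A) − (1+α)·I(Y;Z)` is bounded below by
`(2+α)·I(X;(A,Z)) − (1+α)·I(X;Z) + C′`, where `C′ = I(A;Y) − β·I(X;A) − (1+α)·I(X;A)`. -/
theorem disGenIB_prior_reduction
    {X Y A Z : Type*} [Fintype X] [Fintype Y] [Fintype A] [Fintype Z]
    [Nonempty X] [Nonempty Y] [Nonempty A] [Nonempty Z]
    (p : X → Y → A → Z → ℝ)
    (hp0 : ∀ x y a z, 0 ≤ p x y a z)
    (hp1 : ∑ x, ∑ y, ∑ a, ∑ z, p x y a z = 1)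
    -- Markov chain `A ↔ X ↔ Z`, i.e. `p(x,a,z)·p(x) = p(x,a)·p(x,z)`:
    (hMarkovAXZ : ∀ x a z,
      (∑ y, p x y a z) * (∑ y, ∑ a', ∑ z', p x y a' z')
        = (∑ y, ∑ z', p x y a z') * (∑ y, ∑ a', p x y a' z))
    -- Markov chain `Y ↔ A ↔ Z`, i.e. `p(a,y,z)·p(a) = p(a,y)·p(a,z)`:
    (hMarkovYAZ : ∀ a y z,
      (∑ x, p x y a z) * (∑ x, ∑ y', ∑ z', p x y' a z')
        = (∑ x, ∑ z', p x y a z') * (∑ x, ∑ y', p x y' a z))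
    (α : ℝ) (hα : 0 ≤ α) :
    (mutualInfo (fun x (az : A × Z) => ∑ y, p x y az.1 az.2)
        - (1 + α) * mutualInfo (fun y z => ∑ x, ∑ a, p x y a z)
      ≥ (2 + α) * mutualInfo (fun x (az : A × Z) => ∑ y, p x y az.1 az.2)
        - (1 + α) * (mutualInfo (fun x z => ∑ y, ∑ a, p x y a z)
                      + mutualInfo (fun x a => ∑ y, ∑ z, p x y a z)))
    ∧ ∀ β : ℝ,
      mutualInfo (fun x (az : A × Z) => ∑ y, p x y az.1 az.2)
          + mutualInfo (fun a y => ∑ x, ∑ z, p x y a z)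
          - β * mutualInfo (fun x a => ∑ y, ∑ z, p x y a z)
          - (1 + α) * mutualInfo (fun y z => ∑ x, ∑ a, p x y a z)
        ≥ (2 + α) * mutualInfo (fun x (az : A × Z) => ∑ y, p x y az.1 az.2)
          - (1 + α) * mutualInfo (fun x z => ∑ y, ∑ a, p x y a z)
          + (mutualInfo (fun a y => ∑ x, ∑ z, p x y a z)
              - β * mutualInfo (fun x a => ∑ y, ∑ z, p x y a z)
              - (1 + α) * mutualInfo (fun x a => ∑ y, ∑ z, p x y a z)) :=
  disGenIB_prior_reduction_general p hp0 hMarkovAXZ hMarkovYAZ α hα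
end

section
/- Let X and A be finitely-valued random variables with joint pmf p satisfying p(x,a) > 0 for all (x,a), and let p(a|x) = p(x,a)/p(x). Then I(X;A) ≤ Σ_{x,a} p(x,a)·log p(a|x) − Σ_{x,a} p(x)·p(a)·log p(a|x), i.e. the Contrastive Log-ratio Upper Bound (CLUB) with the true conditional distribution upper-bounds the mutual information. -/
open Finset Real

theorem Real.mul_log_div_le_sub {v w : ℝ} (hv : 0 < v) (hw : 0 ≤ w) :
    w * log (v / w) ≤ v - w := by
  rcases hw.eq_or_lt with rfl | hw
  · simpa using hv.le
  calc w * log (v / w) ≤ w * (v / w - 1) :=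
        mul_le_mul_of_nonneg_left (log_le_sub_one_of_pos (div_pos hv hw)) hw.le
    _ = v - w := by rw [mul_sub, mul_one, mul_div_cancel₀ _ hw.ne']

theorem sum_pos_of_pos_left {α β : Type*} [Fintype β] {p : α → β → ℝ}
    (hp : ∀ x b, 0 < p x b) (x : α) (b : β) : 0 < ∑ b', p x b' :=
  (hp x b).trans_le (single_le_sum (fun b' _ => (hp x b').le) (mem_univ b))

theorem sum_pos_of_pos_right {α β : Type*} [Fintype α] {p : α → β → ℝ}
    (hp : ∀ x b, 0 < p x b) (x : α) (b : β) : 0 < ∑ x', p x' b :=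
  (hp x b).trans_le (single_le_sum (fun x' _ => (hp x' b).le) (mem_univ x))

section Marginals

variable {α β : Type*} [Fintype α] [Fintype β] (p : α → β → ℝ)

theorem log_div_mul_marginals (hp : ∀ x b, 0 < p x b) (x : α) (b : β) :
    log (p x b / ((∑ b', p x b') * ∑ x', p x' b))
      = log (p x b / ∑ b', p x b') - log (∑ x', p x' b) := by
  rw [← div_div, log_div (div_pos (hp x b) (sum_pos_of_pos_left hp x b)).ne'
    (sum_pos_of_pos_right hp x b).ne']

theorem mutualInfo_eq_sub (hp : ∀ x b, 0 < p x b) :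
    mutualInfo p = (∑ x, ∑ b, p x b * log (p x b / ∑ b', p x b'))
      - ∑ x, ∑ b, p x b * log (∑ x', p x' b) := by
  simp only [mutualInfo, log_div_mul_marginals p hp, mul_sub, sum_sub_distrib]

/-- The product of the marginals of a probability mass function has the same second marginal. -/
theorem sum_sum_marginal_mul_marginal_mul (hp1 : ∑ x, ∑ b, p x b = 1) (f : β → ℝ) :
    ∑ x, ∑ b, (∑ b', p x b') * (∑ x', p x' b) * f b = ∑ x, ∑ b, p x b * f b := by
  simp only [mul_assoc, ← mul_sum]
  rw [← sum_mul, hp1, one_mul, sum_comm]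
  simp only [sum_mul]

theorem sum_sum_marginal_mul_marginal_mul_log_le (hp : ∀ x b, 0 < p x b)
    (hp1 : ∑ x, ∑ b, p x b = 1) :
    ∑ x, ∑ b, (∑ b', p x b') * (∑ x', p x' b) * log (p x b / ∑ b', p x b')
      ≤ ∑ x, ∑ b, (∑ b', p x b') * (∑ x', p x' b) * log (∑ x', p x' b) := by
  have gibbs : ∑ x, ∑ b, (∑ b', p x b') * (∑ x', p x' b)
        * log (p x b / ((∑ b', p x b') * ∑ x', p x' b))
      ≤ ∑ x, ∑ b, (p x b - (∑ b', p x b') * ∑ x', p x' b) :=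
    sum_le_sum fun x _ => sum_le_sum fun b _ => mul_log_div_le_sub (hp x b)
      (mul_pos (sum_pos_of_pos_left hp x b) (sum_pos_of_pos_right hp x b)).le
  have total : ∑ x, ∑ b, (∑ b', p x b') * (∑ x', p x' b) = 1 := by
    simpa [hp1] using sum_sum_marginal_mul_marginal_mul p hp1 fun _ => 1
  simp only [log_div_mul_marginals p hp, mul_sub, sum_sub_distrib, total, hp1] at gibbs
  linarith

end Marginals

theorem mutualInfo_le_club_general
    {X A : Type*} [Fintype X] [Fintype A]
    (p : X → A → ℝ)
    (hp0 : ∀ x a, 0 < p x a)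
    (hp1 : ∑ x, ∑ a, p x a = 1) :
    mutualInfo p
      ≤ (∑ x, ∑ a, p x a * Real.log (p x a / (∑ a', p x a')))
        - ∑ x, ∑ a, (∑ a', p x a') * (∑ x', p x' a)
            * Real.log (p x a / (∑ a', p x a')) := by
  rw [mutualInfo_eq_sub p hp0, ← sum_sum_marginal_mul_marginal_mul p hp1]
  exact sub_le_sub_left (sum_sum_marginal_mul_marginal_mul_log_le p hp0 hp1) _

/-- The CLUB (Contrastive Log-ratio Upper Bound) with the true conditional
distribution `p(a|x) = p(x,a)/p(x)` upper-bounds the mutual information: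
`I(X;A) ≤ Σ_{x,a} p(x,a)·log p(a|x) − Σ_{x,a} p(x)·p(a)·log p(a|x)`. -/
theorem mutualInfo_le_club
    {X A : Type*} [Fintype X] [Fintype A] [Nonempty X] [Nonempty A]
    (p : X → A → ℝ)
    (hp0 : ∀ x a, 0 < p x a)
    (hp1 : ∑ x, ∑ a, p x a = 1) :
    mutualInfo p
      ≤ (∑ x, ∑ a, p x a * Real.log (p x a / (∑ a', p x a')))
        - ∑ x, ∑ a, (∑ a', p x a') * (∑ x', p x' a)
            * Real.log (p x a / (∑ a', p x a')) :=
  mutualInfo_le_club_general p hp0 hp1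
end

section
/- Let X, A, Z be finitely-valued random variables with joint pmf p such that p(x) > 0 for all x, and let α′ ≥ 0 be real. Let q(·|a,z) be, for each pair (a,z), a pmf on the value set of X with q(x|a,z) > 0 whenever p(x,a,z) > 0, and let r be a pmf on the value set of Z with r(z) > 0 whenever p(z) > 0. Then I(X;(A,Z)) − α′·I(X;Z) ≥ Σ_{x,a,z} p(x,a,z)·log q(x|a,z) + H(X) − α′·Σ_x p(x)·D( p(·|x) ‖ r ), where p(·|x) is the conditional pmf of Z given X = x. -/
/-!
Both inequalities come from splitting off a relative entropy and using Gibbs' inequality.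
Multiplying and dividing by the decoder `q(x|a,z)` gives
`I(X;(A,Z)) = E[log q(X|A,Z)] + H(X) + D(p(x,a,z) ‖ q(x|a,z)·p(a,z))`,
and averaging the conditional divergences to the prior `r` gives
`Σ_x p(x)·D(p(·|x) ‖ r) = I(X;Z) + D(p(z) ‖ r)`.
Both divergences are nonnegative, and `α' ≥ 0` preserves the direction of the second bound.
-/

open Finset Real

noncomputable def discreteKLDiv {ι : Type*} [Fintype ι] (a b : ι → ℝ) : ℝ :=
  ∑ i, a i * log (a i / b i)

lemma sub_le_mul_log_div_s9 {a b : ℝ} (ha : 0 ≤ a) (hb : 0 ≤ b) (hab : 0 < a → 0 < b) :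
    a - b ≤ a * log (a / b) := by
  rcases ha.eq_or_lt with rfl | ha
  · simpa using hb
  · have hlog := one_sub_inv_le_log_of_pos (div_pos ha (hab ha))
    rw [inv_div] at hlog
    calc a - b = a * (1 - b / a) := by field_simp
      _ ≤ a * log (a / b) := mul_le_mul_of_nonneg_left hlog ha.le

lemma discreteKLDiv_nonneg {ι : Type*} [Fintype ι] {a b : ι → ℝ} (ha : ∀ i, 0 ≤ a i)
    (hb : ∀ i, 0 ≤ b i) (hab : ∀ i, 0 < a i → 0 < b i) (hsum : ∑ i, b i ≤ ∑ i, a i) :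
    0 ≤ discreteKLDiv a b := by
  have h := sum_le_sum fun i (_ : i ∈ univ) => sub_le_mul_log_div_s9 (ha i) (hb i) (hab i)
  rw [sum_sub_distrib] at h
  unfold discreteKLDiv
  linarith

section MutualInfo

variable {α β : Type*} [Fintype α] [Fintype β] {p : α → β → ℝ}

lemma mutualInfo_eq_discreteKLDiv_add_sum_mul_log_sub
    (hp : ∀ u v, 0 ≤ p u v) {q : β → α → ℝ} (hq : ∀ u v, 0 < p u v → 0 < q v u) :
    mutualInfo p
      = discreteKLDiv (fun uv : α × β => p uv.1 uv.2)
          (fun uv => q uv.2 uv.1 * ∑ u', p u' uv.2)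
        + ∑ u, ∑ v, p u v * log (q v u) - ∑ u, (∑ v, p u v) * log (∑ v, p u v) := by
  have hH : ∀ u, (∑ v, p u v) * log (∑ v, p u v) = ∑ v, p u v * log (∑ v', p u v') :=
    fun u => sum_mul ..
  simp only [mutualInfo, discreteKLDiv, Fintype.sum_prod_type, hH]
  rw [← sum_add_distrib, ← sum_sub_distrib]
  refine sum_congr rfl fun u _ => ?_
  rw [← sum_add_distrib, ← sum_sub_distrib]
  refine sum_congr rfl fun v _ => ?_
  rcases (hp u v).eq_or_lt with h0 | h0
  · simp [← h0]
  have hU : 0 < ∑ v', p u v' := sum_pos' (fun v' _ => hp u v') ⟨v, mem_univ v, h0⟩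
  have hV : 0 < ∑ u', p u' v := sum_pos' (fun u' _ => hp u' v) ⟨u, mem_univ u, h0⟩
  have hq := hq u v h0
  rw [log_div h0.ne' (mul_pos hU hV).ne', log_div h0.ne' (mul_pos hq hV).ne',
    log_mul hU.ne' hV.ne', log_mul hq.ne' hV.ne']
  ring

lemma sum_mul_log_sub_entropy_le_mutualInfo (hp : ∀ u v, 0 ≤ p u v) {q : β → α → ℝ}
    (hq0 : ∀ v u, 0 ≤ q v u) (hq1 : ∀ v, ∑ u, q v u = 1)
    (hq : ∀ u v, 0 < p u v → 0 < q v u) :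
    ∑ u, ∑ v, p u v * log (q v u) - ∑ u, (∑ v, p u v) * log (∑ v, p u v)
      ≤ mutualInfo p := by
  have hmass : ∑ uv : α × β, q uv.2 uv.1 * ∑ u', p u' uv.2 = ∑ uv : α × β, p uv.1 uv.2 := by
    simp only [Fintype.sum_prod_type]
    rw [sum_comm]
    simp only [← sum_mul, hq1, one_mul]
    exact sum_comm
  have hD := discreteKLDiv_nonneg (fun uv : α × β => hp uv.1 uv.2)
    (fun uv => mul_nonneg (hq0 _ _) (sum_nonneg fun u' _ => hp u' uv.2))
    (fun uv h => mul_pos (hq _ _ h) (sum_pos' (fun u' _ => hp u' uv.2) ⟨uv.1, mem_univ _, h⟩))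
    hmass.le
  rw [mutualInfo_eq_discreteKLDiv_add_sum_mul_log_sub hp hq]
  linarith

lemma sum_mul_discreteKLDiv_cond_eq (hp : ∀ u v, 0 ≤ p u v) {r : β → ℝ}
    (hr : ∀ v, 0 < ∑ u, p u v → 0 < r v) :
    ∑ u, (∑ v, p u v) * discreteKLDiv (fun v => p u v / ∑ v', p u v') r
      = mutualInfo p + discreteKLDiv (fun v => ∑ u, p u v) r := by
  have hmarg : ∀ v, (∑ u, p u v) * log ((∑ u, p u v) / r v)
      = ∑ u, p u v * log ((∑ u', p u' v) / r v) := fun v => sum_mul ..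
  simp only [mutualInfo, discreteKLDiv, hmarg]
  rw [sum_comm (f := fun v u => p u v * log ((∑ u', p u' v) / r v)), ← sum_add_distrib]
  refine sum_congr rfl fun u _ => ?_
  rw [mul_sum, ← sum_add_distrib]
  refine sum_congr rfl fun v _ => ?_
  rcases (hp u v).eq_or_lt with h0 | h0
  · simp [← h0]
  have hU : 0 < ∑ v', p u v' := sum_pos' (fun v' _ => hp u v') ⟨v, mem_univ v, h0⟩
  have hV : 0 < ∑ u', p u' v := sum_pos' (fun u' _ => hp u' v) ⟨u, mem_univ u, h0⟩
  have hr := hr v hV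
  have hsplit : (p u v / ∑ v', p u v') / r v
      = p u v / ((∑ v', p u v') * ∑ u', p u' v) * ((∑ u', p u' v) / r v) := by
    field_simp
  rw [← mul_assoc, mul_div_cancel₀ _ hU.ne', hsplit,
    log_mul (by positivity) (by positivity), mul_add]

lemma mutualInfo_le_sum_mul_discreteKLDiv_cond (hp : ∀ u v, 0 ≤ p u v) {r : β → ℝ}
    (hr0 : ∀ v, 0 ≤ r v) (hr : ∀ v, 0 < ∑ u, p u v → 0 < r v)
    (hsum : ∑ v, r v ≤ ∑ u, ∑ v, p u v) :
    mutualInfo p ≤ ∑ u, (∑ v, p u v) * discreteKLDiv (fun v => p u v / ∑ v', p u v') r := by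
  have hD := discreteKLDiv_nonneg (fun v => sum_nonneg fun u _ => hp u v) hr0 hr
    (hsum.trans_eq sum_comm)
  rw [sum_mul_discreteKLDiv_cond_eq hp hr]
  linarith

end MutualInfo

theorem disGenIB_prior_ge_avae_objective_general
    {X A Z : Type*} [Fintype X] [Fintype A] [Fintype Z]
    (p : X → A → Z → ℝ)
    (hp0 : ∀ x a z, 0 ≤ p x a z)
    (hp1 : ∑ x, ∑ a, ∑ z, p x a z = 1)
    (α' : ℝ) (hα' : 0 ≤ α')
    (q : A → Z → X → ℝ)
    (hq0 : ∀ a z x, 0 ≤ q a z x)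
    (hq1 : ∀ a z, ∑ x, q a z x = 1)
    (hqpos : ∀ x a z, 0 < p x a z → 0 < q a z x)
    (r : Z → ℝ)
    (hr0 : ∀ z, 0 ≤ r z)
    (hr1 : ∑ z, r z = 1)
    (hrpos : ∀ z, 0 < ∑ x, ∑ a, p x a z → 0 < r z) :
    mutualInfo (fun x (az : A × Z) => p x az.1 az.2)
        - α' * mutualInfo (fun x z => ∑ a, p x a z)
      ≥ (∑ x, ∑ a, ∑ z, p x a z * Real.log (q a z x))
        + (- ∑ x, (∑ a, ∑ z, p x a z) * Real.log (∑ a, ∑ z, p x a z))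
        - α' * ∑ x, (∑ a, ∑ z, p x a z) *
            (∑ z, ((∑ a, p x a z) / (∑ a, ∑ z', p x a z'))
              * Real.log (((∑ a, p x a z) / (∑ a, ∑ z', p x a z')) / r z)) := by
  have hswap : ∀ x, ∑ z, ∑ a, p x a z = ∑ a, ∑ z, p x a z := fun x => sum_comm
  have hAZ := sum_mul_log_sub_entropy_le_mutualInfo (p := fun x (az : A × Z) => p x az.1 az.2)
    (q := fun az x => q az.1 az.2 x) (fun x az => hp0 x az.1 az.2)
    (fun az x => hq0 az.1 az.2 x) (fun az => hq1 az.1 az.2) (fun x az => hqpos x az.1 az.2)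
  have hZ := mutualInfo_le_sum_mul_discreteKLDiv_cond (p := fun x z => ∑ a, p x a z)
    (fun x z => sum_nonneg fun a _ => hp0 x a z) hr0 hrpos
    (by simp only [hswap, hp1, hr1, le_refl])
  simp only [Fintype.sum_prod_type] at hAZ
  simp only [discreteKLDiv, hswap] at hZ
  linarith [mul_le_mul_of_nonneg_left hZ hα']

/-- Basis of Theorem 6 of the paper: the reduced DisGenIB objective
`I(X;(A,Z)) − α′·I(X;Z)` is lower-bounded by the attribute-based VAE objective
`Σ_{x,a,z} p(x,a,z)·log q(x|a,z) + H(X) − α′·Σ_x p(x)·D(p(·|x)‖r)`. -/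
theorem disGenIB_prior_ge_avae_objective
    {X A Z : Type*} [Fintype X] [Fintype A] [Fintype Z]
    [Nonempty X] [Nonempty A] [Nonempty Z]
    (p : X → A → Z → ℝ)
    (hp0 : ∀ x a z, 0 ≤ p x a z)
    (hp1 : ∑ x, ∑ a, ∑ z, p x a z = 1)
    (hpx : ∀ x, 0 < ∑ a, ∑ z, p x a z)
    (α' : ℝ) (hα' : 0 ≤ α')
    (q : A → Z → X → ℝ)
    (hq0 : ∀ a z x, 0 ≤ q a z x)
    (hq1 : ∀ a z, ∑ x, q a z x = 1)
    (hqpos : ∀ x a z, 0 < p x a z → 0 < q a z x)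
    (r : Z → ℝ)
    (hr0 : ∀ z, 0 ≤ r z)
    (hr1 : ∑ z, r z = 1)
    (hrpos : ∀ z, 0 < ∑ x, ∑ a, p x a z → 0 < r z) :
    mutualInfo (fun x (az : A × Z) => p x az.1 az.2)
        - α' * mutualInfo (fun x z => ∑ a, p x a z)
      ≥ (∑ x, ∑ a, ∑ z, p x a z * Real.log (q a z x))
        + (- ∑ x, (∑ a, ∑ z, p x a z) * Real.log (∑ a, ∑ z, p x a z))
        - α' * ∑ x, (∑ a, ∑ z, p x a z) *
            (∑ z, ((∑ a, p x a z) / (∑ a, ∑ z', p x a z'))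
              * Real.log (((∑ a, p x a z) / (∑ a, ∑ z', p x a z')) / r z)) :=
  disGenIB_prior_ge_avae_objective_general p hp0 hp1 α' hα' q hq0 hq1 hqpos r hr0 hr1 hrpos
end

section
/- Let X and A be finitely-valued random variables with joint pmf p satisfying p(x,a) > 0 for all (x,a), and let p(a|x) = p(x,a)/p(x). Then Σ_{x,a} p(x)·p(a)·log p(a|x) ≤ Σ_a p(a)·log p(a). -/
/-! For a fixed value `a`, Jensen's inequality for the concave logarithm with the weights `p(x)`
bounds `Σ_x p(x) log (p(x,a) / p(x))` by `log Σ_x p(x,a) = log p(a)`. Multiplying by `p(a) ≥ 0`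
and summing over `a` gives the claim. -/

open Finset

theorem Real.sum_mul_log_div_le_log_sum {ι : Type*} (s : Finset ι) {w c : ι → ℝ}
    (hw : ∀ i ∈ s, 0 < w i) (hc : ∀ i ∈ s, 0 < c i) (hw1 : ∑ i ∈ s, w i = 1) :
    ∑ i ∈ s, w i * Real.log (c i / w i) ≤ Real.log (∑ i ∈ s, c i) := by
  have jensen := strictConcaveOn_log_Ioi.concaveOn.le_map_sum (fun i hi => (hw i hi).le) hw1
    (fun i hi => div_pos (hc i hi) (hw i hi))
  have hmean : ∑ i ∈ s, w i * (c i / w i) = ∑ i ∈ s, c i :=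
    sum_congr rfl fun i hi => mul_div_cancel₀ _ (hw i hi).ne'
  simpa only [smul_eq_mul, hmean] using jensen

theorem club_jensen_step_general
    {X A : Type*} [Fintype X] [Fintype A]
    (p : X → A → ℝ)
    (hp0 : ∀ x a, 0 < p x a)
    (hp1 : ∑ x, ∑ a, p x a = 1) :
    ∑ x, ∑ a, (∑ a', p x a') * (∑ x', p x' a) * Real.log (p x a / (∑ a', p x a'))
      ≤ ∑ a, (∑ x', p x' a) * Real.log (∑ x', p x' a) := by
  rw [sum_comm]
  refine sum_le_sum fun a _ => ?_
  have hmarginal_pos : ∀ x, 0 < ∑ a', p x a' := fun x =>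
    (hp0 x a).trans_le (single_le_sum (fun a' _ => (hp0 x a').le) (mem_univ a))
  calc ∑ x, (∑ a', p x a') * (∑ x', p x' a) * Real.log (p x a / ∑ a', p x a')
      = (∑ x', p x' a) * ∑ x, (∑ a', p x a') * Real.log (p x a / ∑ a', p x a') := by
        rw [mul_sum]
        exact sum_congr rfl fun x _ => by ring
    _ ≤ (∑ x', p x' a) * Real.log (∑ x', p x' a) :=
        mul_le_mul_of_nonneg_left
          (Real.sum_mul_log_div_le_log_sum univ (fun x _ => hmarginal_pos x)
            (fun x _ => hp0 x a) hp1)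
          (sum_nonneg fun x _ => (hp0 x a).le)

/-- Jensen-type inequality underlying the CLUB upper bound on mutual information:
for a strictly positive joint pmf `p` on `X × A`, with `p(a|x) = p(x,a)/p(x)`,
`Σ_{x,a} p(x)·p(a)·log p(a|x) ≤ Σ_a p(a)·log p(a)`. -/
theorem club_jensen_step
    {X A : Type*} [Fintype X] [Fintype A] [Nonempty X] [Nonempty A]
    (p : X → A → ℝ)
    (hp0 : ∀ x a, 0 < p x a)
    (hp1 : ∑ x, ∑ a, p x a = 1) :
    ∑ x, ∑ a, (∑ a', p x a') * (∑ x', p x' a) * Real.log (p x a / (∑ a', p x a'))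
      ≤ ∑ a, (∑ x', p x' a) * Real.log (∑ x', p x' a) :=
  club_jensen_step_general p hp0 hp1
end
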